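/- arXiv:2201.12167 — 5 statements merged into one kernel-verified Lean document; each statement's English description precedes it below -/
import Mathlib

section
/- Let g be a Lie algebra with a complex structure J (J² = -id) satisfying the integrability condition [JX,JY] = [X,Y] + J[JX,Y] + J[X,JY] for all X,Y. Fix e₁ in g with Je₁ = e₂, and suppose n is a J-invariant ideal with g = span{e₁,e₂} ⊕ n. Let A and B denote the projections onto n of ad(e₁)|_n and ad(e₂)|_n respectively, and let J_n be the restriction of J to n. Then J_n A - A J_n = J_n (B J_n - J_n B), i.e. [J_n, A] = J_n [B, J_n] as endomorphisms of n. -/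
/-! The projection `p` onto `n` along `span{e₁, e₂}` commutes with `J`, since both summands are
`J`-invariant. Projecting the integrability condition for the pair `(e₁, Y)` onto `n` therefore
gives `B (J Y) = A Y + J (B Y) + J (A (J Y))`, and applying `J` to it is the claim. -/

section

variable {R M : Type*} [Ring R] [AddCommGroup M] [Module R M]

theorem span_pair_le_comap_of_apply_apply_eq_neg {J : M →ₗ[R] M} (hJ2 : ∀ x, J (J x) = -x)
    (e : M) : Submodule.span R {e, J e} ≤ (Submodule.span R {e, J e}).comap J := by
  rw [Submodule.span_le, Set.insert_subset_iff, Set.singleton_subset_iff]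
  refine ⟨Submodule.subset_span (by simp), ?_⟩
  simp only [SetLike.mem_coe, Submodule.mem_comap, hJ2]
  exact neg_mem (Submodule.subset_span (by simp))

theorem apply_comm_of_invariant_of_projection {p J : M →ₗ[R] M} {N W : Submodule R M}
    (hpN : ∀ x, p x ∈ N) (hpid : ∀ x ∈ N, p x = x) (hpW : W ≤ LinearMap.ker p)
    (hsplit : ∀ x, x - p x ∈ W) (hJN : ∀ x ∈ N, J x ∈ N) (hJW : W ≤ W.comap J) (x : M) :
    p (J x) = J (p x) := by
  have hx : J x = J (x - p x) + J (p x) := by rw [← map_add, sub_add_cancel]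
  rw [hx, map_add, hpW (hJW (hsplit x)), zero_add, hpid _ (hJN _ (hpN x))]

end

/-- Let `g` be a Lie algebra with an integrable complex structure `J`, `n` a
`J`-invariant ideal, and `e₁, e₂ = J e₁` spanning a complement of `n`. If `p` is the projection
of `g` onto `n` along `span{e₁,e₂}`, and `A = p ∘ ad(e₁)`, `B = p ∘ ad(e₂)` on `n`, then
`[J_n, A] = J_n [B, J_n]` on `n`, i.e. `J(AY) - A(JY) = J(B(JY)) - J(J(BY))` for all `Y ∈ n`. -/
theorem stmt3
    (g : Type*) [LieRing g] [LieAlgebra ℝ g]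
    (J : g →ₗ[ℝ] g)
    (hJ2 : ∀ x, J (J x) = -x)
    (hint : ∀ x y : g, ⁅J x, J y⁆ = ⁅x, y⁆ + J ⁅J x, y⁆ + J ⁅x, J y⁆)
    (n : LieIdeal ℝ g)
    (hJn : ∀ x ∈ n, J x ∈ n)
    (e₁ e₂ : g)
    (he₂ : J e₁ = e₂)
    (p : g →ₗ[ℝ] g)
    (hpn : ∀ x : g, p x ∈ n)
    (hpid : ∀ x ∈ n, p x = x)
    (hpe₁ : p e₁ = 0)
    (hpe₂ : p e₂ = 0)
    (hspan : ∀ x : g, x - p x ∈ Submodule.span ℝ ({e₁, e₂} : Set g))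
    (A B : g →ₗ[ℝ] g)
    (hA : ∀ x, A x = p ⁅e₁, x⁆)
    (hB : ∀ x, B x = p ⁅e₂, x⁆) :
    ∀ Y ∈ n, J (A Y) - A (J Y) = J (B (J Y)) - J (J (B Y)) := by
  intro Y _
  subst he₂
  have hpJ : ∀ z, p (J z) = J (p z) :=
    apply_comm_of_invariant_of_projection (N := (n : Submodule ℝ g)) hpn hpid
      (Submodule.span_le.mpr (by simp [Set.insert_subset_iff, hpe₁, hpe₂])) hspan hJn
      (span_pair_le_comap_of_apply_apply_eq_neg hJ2 e₁)
  have hproj : B (J Y) = A Y + J (B Y) + J (A (J Y)) := by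
    simpa only [hA, hB, map_add, hpJ] using congrArg p (hint e₁ Y)
  rw [hproj, map_add, map_add, hJ2 (A (J Y))]
  abel
end

section
/- Let (n, J, ⟨·,·⟩) be a 2-step nilpotent Lie algebra with Hermitian structure whose center z is J-invariant, and define the Bismut torsion c(U,Y,Z) = -⟨[JU,JY],Z⟩ - ⟨[JY,JZ],U⟩ - ⟨[JZ,JU],Y⟩. If dc = 0 (the Chevalley–Eilenberg differential of c vanishes), then for all W, Y in n: 2⟨[Y,JY],[W,JW]⟩ = ‖[W,Y]‖² + ‖[W,JY]‖² + ‖[JW,Y]‖² + ‖[JW,JY]‖². -/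
/-! Brackets are central in a 2-step nilpotent Lie algebra, and `J` preserves the centre, so
every bracket with some `J ⁅x, y⁆` vanishes. Evaluating `dc` at `(W, JW, Y, JY)` kills twelve
of its eighteen terms, and by `J² = -1` the remaining six are the two sides of the identity. -/

section Center

variable {R L : Type*} [CommRing R] [LieRing L] [LieAlgebra R L]

lemma LieAlgebra.lie_mem_center_of_lie_lie_eq_zero (h : ∀ x y w : L, ⁅⁅x, y⁆, w⁆ = 0)
    (x y : L) : ⁅x, y⁆ ∈ LieAlgebra.center R L :=
  (LieModule.mem_maxTrivSubmodule R L L _).2 fun w => by rw [← lie_skew, h, neg_zero]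

lemma LieAlgebra.lie_eq_zero_of_mem_center_right {c : L} (hc : c ∈ LieAlgebra.center R L)
    (z : L) : ⁅z, c⁆ = 0 :=
  (LieModule.mem_maxTrivSubmodule R L L c).1 hc z

lemma LieAlgebra.lie_eq_zero_of_mem_center_left {c : L} (hc : c ∈ LieAlgebra.center R L)
    (z : L) : ⁅c, z⁆ = 0 := by
  rw [← lie_skew, lie_eq_zero_of_mem_center_right hc, neg_zero]

end Center

theorem stmt6_general
    (n : Type*) [LieRing n] [LieAlgebra ℝ n]
    (ip : n →ₗ[ℝ] n →ₗ[ℝ] ℝ)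
    (hsymm : ∀ x y, ip x y = ip y x)
    (J : n →ₗ[ℝ] n)
    (hJ2 : ∀ x, J (J x) = -x)
    (h2step : ∀ x y w : n, ⁅⁅x, y⁆, w⁆ = 0)
    (hJcenter : ∀ x ∈ LieAlgebra.center ℝ n, J x ∈ LieAlgebra.center ℝ n)
    -- `dc = 0`, where `dc` is the Chevalley–Eilenberg differential of the Bismut torsion
    -- `c(U,Y,Z) = -⟨[JU,JY],Z⟩ - ⟨[JY,JZ],U⟩ - ⟨[JZ,JU],Y⟩`:
    (hSKT : ∀ W U Y Z : n,
        ip ⁅J ⁅W, U⁆, J Y⁆ Z + ip ⁅J Y, J Z⁆ ⁅W, U⁆ + ip ⁅J Z, J ⁅W, U⁆⁆ Y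
      - ip ⁅J ⁅W, Y⁆, J U⁆ Z - ip ⁅J U, J Z⁆ ⁅W, Y⁆ - ip ⁅J Z, J ⁅W, Y⁆⁆ U
      + ip ⁅J ⁅W, Z⁆, J U⁆ Y + ip ⁅J U, J Y⁆ ⁅W, Z⁆ + ip ⁅J Y, J ⁅W, Z⁆⁆ U
      + ip ⁅J ⁅U, Y⁆, J W⁆ Z + ip ⁅J W, J Z⁆ ⁅U, Y⁆ + ip ⁅J Z, J ⁅U, Y⁆⁆ W
      - ip ⁅J ⁅U, Z⁆, J W⁆ Y - ip ⁅J W, J Y⁆ ⁅U, Z⁆ - ip ⁅J Y, J ⁅U, Z⁆⁆ W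
      + ip ⁅J ⁅Y, Z⁆, J W⁆ U + ip ⁅J W, J U⁆ ⁅Y, Z⁆ + ip ⁅J U, J ⁅Y, Z⁆⁆ W = 0) :
    ∀ W Y : n,
      2 * ip ⁅Y, J Y⁆ ⁅W, J W⁆ =
        ip ⁅W, Y⁆ ⁅W, Y⁆ + ip ⁅W, J Y⁆ ⁅W, J Y⁆
          + ip ⁅J W, Y⁆ ⁅J W, Y⁆ + ip ⁅J W, J Y⁆ ⁅J W, J Y⁆ := by
  intro W Y
  have hJ_mem_center (x y : n) : J ⁅x, y⁆ ∈ LieAlgebra.center ℝ n :=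
    hJcenter _ (LieAlgebra.lie_mem_center_of_lie_lie_eq_zero h2step x y)
  have hleft (x y z : n) : ⁅J ⁅x, y⁆, z⁆ = 0 :=
    LieAlgebra.lie_eq_zero_of_mem_center_left (hJ_mem_center x y) z
  have hright (x y z : n) : ⁅z, J ⁅x, y⁆⁆ = 0 :=
    LieAlgebra.lie_eq_zero_of_mem_center_right (hJ_mem_center x y) z
  have h := hSKT W (J W) Y (J Y)
  simp only [hleft, hright, hJ2, map_zero, LinearMap.zero_apply, lie_neg, neg_lie, neg_neg,
    map_neg, LinearMap.neg_apply, ← lie_skew (J Y) Y, ← lie_skew (J W) W] at h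
  linarith [hsymm ⁅W, J W⁆ ⁅Y, J Y⁆]

/-- For a 2-step nilpotent Hermitian Lie algebra with `J`-invariant center and
vanishing Chevalley–Eilenberg differential of the Bismut torsion 3-form `c`, one has
`2⟨[Y,JY],[W,JW]⟩ = ‖[W,Y]‖² + ‖[W,JY]‖² + ‖[JW,Y]‖² + ‖[JW,JY]‖²` for all `W, Y`. -/
theorem stmt6
    (n : Type*) [LieRing n] [LieAlgebra ℝ n] [Module.Finite ℝ n]
    (ip : n →ₗ[ℝ] n →ₗ[ℝ] ℝ)
    (hsymm : ∀ x y, ip x y = ip y x)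
    (hpos : ∀ x : n, x ≠ 0 → 0 < ip x x)
    (J : n →ₗ[ℝ] n)
    (hJ2 : ∀ x, J (J x) = -x)
    (hint : ∀ x y : n, ⁅J x, J y⁆ = ⁅x, y⁆ + J ⁅J x, y⁆ + J ⁅x, J y⁆)
    (hJorth : ∀ x y, ip (J x) (J y) = ip x y)
    (h2step : ∀ x y w : n, ⁅⁅x, y⁆, w⁆ = 0)
    (hJcenter : ∀ x ∈ LieAlgebra.center ℝ n, J x ∈ LieAlgebra.center ℝ n)
    -- `dc = 0`, where `dc` is the Chevalley–Eilenberg differential of the Bismut torsion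
    -- `c(U,Y,Z) = -⟨[JU,JY],Z⟩ - ⟨[JY,JZ],U⟩ - ⟨[JZ,JU],Y⟩`:
    (hSKT : ∀ W U Y Z : n,
        ip ⁅J ⁅W, U⁆, J Y⁆ Z + ip ⁅J Y, J Z⁆ ⁅W, U⁆ + ip ⁅J Z, J ⁅W, U⁆⁆ Y
      - ip ⁅J ⁅W, Y⁆, J U⁆ Z - ip ⁅J U, J Z⁆ ⁅W, Y⁆ - ip ⁅J Z, J ⁅W, Y⁆⁆ U
      + ip ⁅J ⁅W, Z⁆, J U⁆ Y + ip ⁅J U, J Y⁆ ⁅W, Z⁆ + ip ⁅J Y, J ⁅W, Z⁆⁆ U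
      + ip ⁅J ⁅U, Y⁆, J W⁆ Z + ip ⁅J W, J Z⁆ ⁅U, Y⁆ + ip ⁅J Z, J ⁅U, Y⁆⁆ W
      - ip ⁅J ⁅U, Z⁆, J W⁆ Y - ip ⁅J W, J Y⁆ ⁅U, Z⁆ - ip ⁅J Y, J ⁅U, Z⁆⁆ W
      + ip ⁅J ⁅Y, Z⁆, J W⁆ U + ip ⁅J W, J U⁆ ⁅Y, Z⁆ + ip ⁅J U, J ⁅Y, Z⁆⁆ W = 0) :
    ∀ W Y : n,
      2 * ip ⁅Y, J Y⁆ ⁅W, J W⁆ =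
        ip ⁅W, Y⁆ ⁅W, Y⁆ + ip ⁅W, J Y⁆ ⁅W, J Y⁆
          + ip ⁅J W, Y⁆ ⁅J W, Y⁆ + ip ⁅J W, J Y⁆ ⁅J W, J Y⁆ :=
  stmt6_general n ip hsymm J hJ2 h2step hJcenter hSKT
end

section
/- In the construction g = n₁ ⊕ n₂ ⊕ span{Z, W} with [Z,W] = X + Y where X ∈ z(n₁), Y ∈ z(n₂) are nonzero, the complex structure J defined by J|_{n₁} = J₁, J|_{n₂} = J₂, JZ = W, JW = -Z is integrable on g (satisfies the Nijenhuis condition) provided J₁ and J₂ are integrable on n₁ and n₂ respectively and J_i preserves the center of n_i. -/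
/-!
On each factor `nᵢ` the bracket of `g` is that of `nᵢ` twisted by `ω(p, q) • X`, where `ω` is the
area form on `span{Z, W}`. Since `ω(Jp, Jq) = ω(p, q)` and `ω(Jp, q) + ω(p, Jq) = 0`, the twist
terms cancel in the Nijenhuis identity, which then reduces to that of `Jᵢ`; the `span{Z, W}`
components of all brackets vanish.
-/

theorem LieAlgebra.nijenhuis_add_smul {R n : Type*} [CommRing R] [LieRing n] [LieAlgebra R n]
    {J : n →ₗ[R] n} (hJ : ∀ x y : n, ⁅J x, J y⁆ = ⁅x, y⁆ + J ⁅J x, y⁆ + J ⁅x, J y⁆)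
    (X : n) {x y : n} {a a' b c : R} (ha : a' = a) (hbc : b + c = 0) :
    ⁅J x, J y⁆ + a' • X = (⁅x, y⁆ + a • X) + J (⁅J x, y⁆ + b • X) + J (⁅x, J y⁆ + c • X) := by
  have hc : c = -b := eq_neg_of_add_eq_zero_right hbc
  rw [hJ, ha, hc]
  simp only [map_add, map_smul]
  module

theorem stmt9_general
    (n₁ n₂ : Type*) [LieRing n₁] [LieAlgebra ℝ n₁] [LieRing n₂] [LieAlgebra ℝ n₂]
    (J₁ : n₁ →ₗ[ℝ] n₁) (J₂ : n₂ →ₗ[ℝ] n₂)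
    (hint₁ : ∀ x y : n₁, ⁅J₁ x, J₁ y⁆ = ⁅x, y⁆ + J₁ ⁅J₁ x, y⁆ + J₁ ⁅x, J₁ y⁆)
    (hint₂ : ∀ x y : n₂, ⁅J₂ x, J₂ y⁆ = ⁅x, y⁆ + J₂ ⁅J₂ x, y⁆ + J₂ ⁅x, J₂ y⁆)
    (X : n₁)
    (Y : n₂)
    (br : (n₁ × n₂ × ℝ × ℝ) → (n₁ × n₂ × ℝ × ℝ) → (n₁ × n₂ × ℝ × ℝ))
    (hbr : ∀ u v : n₁ × n₂ × ℝ × ℝ,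
      br u v = (⁅u.1, v.1⁆ + (u.2.2.1 * v.2.2.2 - u.2.2.2 * v.2.2.1) • X,
                ⁅u.2.1, v.2.1⁆ + (u.2.2.1 * v.2.2.2 - u.2.2.2 * v.2.2.1) • Y, 0, 0))
    (J : (n₁ × n₂ × ℝ × ℝ) → (n₁ × n₂ × ℝ × ℝ))
    (hJ : ∀ u : n₁ × n₂ × ℝ × ℝ, J u = (J₁ u.1, J₂ u.2.1, -u.2.2.2, u.2.2.1)) :
    ∀ u v : n₁ × n₂ × ℝ × ℝ,
      br (J u) (J v) = br u v + J (br (J u) v) + J (br u (J v)) := by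
  intro u v
  simp only [hbr, hJ, Prod.mk_add_mk, Prod.mk.injEq]
  exact ⟨LieAlgebra.nijenhuis_add_smul hint₁ X (by ring) (by ring),
    LieAlgebra.nijenhuis_add_smul hint₂ Y (by ring) (by ring), by ring, by ring⟩

/-- In the construction `g = n₁ ⊕ n₂ ⊕ span{Z,W}` with `[Z,W] = X + Y`
(`0 ≠ X ∈ z(n₁)`, `0 ≠ Y ∈ z(n₂)`), the blockwise complex structure `J` with `J|_{nᵢ} = Jᵢ`,
`JZ = W`, `JW = -Z` is integrable on `g`, provided `J₁, J₂` are integrable complex structures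
preserving the respective centers. Here `g` is modeled as `n₁ × n₂ × ℝ × ℝ`. -/
theorem stmt9
    (n₁ n₂ : Type*) [LieRing n₁] [LieAlgebra ℝ n₁] [LieRing n₂] [LieAlgebra ℝ n₂]
    (h2step₁ : ∀ x y w : n₁, ⁅⁅x, y⁆, w⁆ = 0)
    (h2step₂ : ∀ x y w : n₂, ⁅⁅x, y⁆, w⁆ = 0)
    (J₁ : n₁ →ₗ[ℝ] n₁) (J₂ : n₂ →ₗ[ℝ] n₂)
    (hJ₁2 : ∀ x, J₁ (J₁ x) = -x) (hJ₂2 : ∀ x, J₂ (J₂ x) = -x)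
    (hint₁ : ∀ x y : n₁, ⁅J₁ x, J₁ y⁆ = ⁅x, y⁆ + J₁ ⁅J₁ x, y⁆ + J₁ ⁅x, J₁ y⁆)
    (hint₂ : ∀ x y : n₂, ⁅J₂ x, J₂ y⁆ = ⁅x, y⁆ + J₂ ⁅J₂ x, y⁆ + J₂ ⁅x, J₂ y⁆)
    (hJc₁ : ∀ x ∈ LieAlgebra.center ℝ n₁, J₁ x ∈ LieAlgebra.center ℝ n₁)
    (hJc₂ : ∀ x ∈ LieAlgebra.center ℝ n₂, J₂ x ∈ LieAlgebra.center ℝ n₂)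
    (X : n₁) (hX : X ∈ LieAlgebra.center ℝ n₁) (hX0 : X ≠ 0)
    (Y : n₂) (hY : Y ∈ LieAlgebra.center ℝ n₂) (hY0 : Y ≠ 0)
    (br : (n₁ × n₂ × ℝ × ℝ) → (n₁ × n₂ × ℝ × ℝ) → (n₁ × n₂ × ℝ × ℝ))
    (hbr : ∀ u v : n₁ × n₂ × ℝ × ℝ,
      br u v = (⁅u.1, v.1⁆ + (u.2.2.1 * v.2.2.2 - u.2.2.2 * v.2.2.1) • X,
                ⁅u.2.1, v.2.1⁆ + (u.2.2.1 * v.2.2.2 - u.2.2.2 * v.2.2.1) • Y, 0, 0))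
    (J : (n₁ × n₂ × ℝ × ℝ) → (n₁ × n₂ × ℝ × ℝ))
    (hJ : ∀ u : n₁ × n₂ × ℝ × ℝ, J u = (J₁ u.1, J₂ u.2.1, -u.2.2.2, u.2.2.1)) :
    ∀ u v : n₁ × n₂ × ℝ × ℝ,
      br (J u) (J v) = br u v + J (br (J u) v) + J (br u (J v)) :=
  stmt9_general n₁ n₂ J₁ J₂ hint₁ hint₂ X Y br hbr J hJ
end

section
/- Let n be the 6-dimensional real Lie algebra with orthonormal basis f₁,...,f₆ and structure equations given by df⁵ = -f¹² + f¹⁴ - f²³ - f³⁴ (all other df^i = 0), and J the complex structure Jf₁ = f₂, Jf₃ = f₄, Jf₅ = f₆. Then J is an abelian complex structure, and the Bismut torsion 3-form c = -f¹²⁵ + f¹⁴⁵ - f²³⁵ - f³⁴⁵ is closed, so (n,J,⟨·,·⟩) is SKT. -/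
/-! Every bracket is a multiple of `f₅`, with coefficient the decomposable 2-form
`ω = structureForm = (f¹ - f³) ∧ (f² - f⁴)`, and `ω` is invariant under `J`; hence `J` is
abelian. Since `J` moves `f₅` to the central `f₆`, in `dc` only the terms
`⟨[JY, JZ], [W, U]⟩ = ω(Y,Z) ω(W,U)` survive, and they add up to a multiple of `ω ∧ ω = 0`. -/

/-- The 6-dimensional nilpotent Lie bracket with `[f₁,f₂] = f₅`, `[f₁,f₄] = -f₅`,
`[f₂,f₃] = f₅`, `[f₃,f₄] = f₅` (0-indexed on `Fin 6`), i.e. `df⁵ = -f¹²+f¹⁴-f²³-f³⁴`. -/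
def br6 (x y : Fin 6 → ℝ) : Fin 6 → ℝ :=
  fun i => if i = 4 then
    (x 0 * y 1 - x 1 * y 0) - (x 0 * y 3 - x 3 * y 0)
      + (x 1 * y 2 - x 2 * y 1) + (x 2 * y 3 - x 3 * y 2)
  else 0

/-- The complex structure `Jf₁ = f₂`, `Jf₃ = f₄`, `Jf₅ = f₆`. -/
def J6 (x : Fin 6 → ℝ) : Fin 6 → ℝ := ![-x 1, x 0, -x 3, x 2, -x 5, x 4]

/-- The standard inner product on `ℝ⁶` (the basis `f₁,…,f₆` is orthonormal). -/
def ip6 (x y : Fin 6 → ℝ) : ℝ := ∑ i, x i * y i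

/-- The Bismut torsion 3-form. -/
def c6 (U Y Z : Fin 6 → ℝ) : ℝ :=
  -ip6 (br6 (J6 U) (J6 Y)) Z - ip6 (br6 (J6 Y) (J6 Z)) U - ip6 (br6 (J6 Z) (J6 U)) Y

/-- The Chevalley–Eilenberg differential of `c6`. -/
def dc6 (W U Y Z : Fin 6 → ℝ) : ℝ :=
    ip6 (br6 (J6 (br6 W U)) (J6 Y)) Z + ip6 (br6 (J6 Y) (J6 Z)) (br6 W U)
      + ip6 (br6 (J6 Z) (J6 (br6 W U))) Y
  - ip6 (br6 (J6 (br6 W Y)) (J6 U)) Z - ip6 (br6 (J6 U) (J6 Z)) (br6 W Y)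
      - ip6 (br6 (J6 Z) (J6 (br6 W Y))) U
  + ip6 (br6 (J6 (br6 W Z)) (J6 U)) Y + ip6 (br6 (J6 U) (J6 Y)) (br6 W Z)
      + ip6 (br6 (J6 Y) (J6 (br6 W Z))) U
  + ip6 (br6 (J6 (br6 U Y)) (J6 W)) Z + ip6 (br6 (J6 W) (J6 Z)) (br6 U Y)
      + ip6 (br6 (J6 Z) (J6 (br6 U Y))) W
  - ip6 (br6 (J6 (br6 U Z)) (J6 W)) Y - ip6 (br6 (J6 W) (J6 Y)) (br6 U Z)
      - ip6 (br6 (J6 Y) (J6 (br6 U Z))) W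
  + ip6 (br6 (J6 (br6 Y Z)) (J6 W)) U + ip6 (br6 (J6 W) (J6 U)) (br6 Y Z)
      + ip6 (br6 (J6 U) (J6 (br6 Y Z))) W

/-- The 3-form `f^i ∧ f^j ∧ f^k`. -/
def w6 (i j k : Fin 6) (U Y Z : Fin 6 → ℝ) : ℝ :=
  Matrix.det !![U i, U j, U k; Y i, Y j, Y k; Z i, Z j, Z k]

def structureForm (x y : Fin 6 → ℝ) : ℝ :=
  (x 0 - x 2) * (y 1 - y 3) - (x 1 - x 3) * (y 0 - y 2)

lemma br6_eq_single (x y : Fin 6 → ℝ) : br6 x y = Pi.single 4 (structureForm x y) := by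
  funext i
  by_cases hi : i = 4
  · subst hi
    simp only [br6, structureForm, if_pos, Pi.single_eq_same]
    ring
  · simp [br6, hi]

lemma structureForm_swap (x y : Fin 6 → ℝ) : structureForm x y = -structureForm y x := by
  unfold structureForm
  ring

lemma structureForm_J6 (x y : Fin 6 → ℝ) : structureForm (J6 x) (J6 y) = structureForm x y := by
  simp only [structureForm, J6, Matrix.cons_val]
  ring

lemma structureForm_eq_zero_left {x : Fin 6 → ℝ} (h₀ : x 0 = x 2) (h₁ : x 1 = x 3)
    (y : Fin 6 → ℝ) : structureForm x y = 0 := by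
  simp [structureForm, h₀, h₁]

lemma structureForm_eq_zero_right (x : Fin 6 → ℝ) {y : Fin 6 → ℝ} (h₀ : y 0 = y 2)
    (h₁ : y 1 = y 3) : structureForm x y = 0 := by
  rw [structureForm_swap, structureForm_eq_zero_left h₀ h₁, neg_zero]

lemma structureForm_wedge_self (W U Y Z : Fin 6 → ℝ) :
    structureForm W U * structureForm Y Z - structureForm W Y * structureForm U Z
      + structureForm W Z * structureForm U Y = 0 := by
  unfold structureForm
  ring

lemma ip6_single_left (i : Fin 6) (a : ℝ) (z : Fin 6 → ℝ) : ip6 (Pi.single i a) z = a * z i := by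
  simp [ip6, Pi.single_apply]

lemma ip6_zero_left (z : Fin 6 → ℝ) : ip6 0 z = 0 := by
  simp [ip6]

lemma J6_single_four (a : ℝ) : J6 (Pi.single 4 a) = Pi.single 5 a := by
  funext i
  fin_cases i <;> simp [J6]

lemma br6_swap (x y : Fin 6 → ℝ) : br6 x y = -br6 y x := by
  rw [br6_eq_single, br6_eq_single, structureForm_swap, Pi.single_neg]

lemma J6_J6 (x : Fin 6 → ℝ) : J6 (J6 x) = -x := by
  funext i
  fin_cases i <;> simp [J6]

lemma br6_br6 (x y z : Fin 6 → ℝ) : br6 x (br6 y z) = 0 := by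
  rw [br6_eq_single x, structureForm_eq_zero_right] <;> simp [br6_eq_single]

lemma br6_J6_br6_left (x y z : Fin 6 → ℝ) : br6 (J6 (br6 x y)) z = 0 := by
  rw [br6_eq_single _ z, br6_eq_single x, J6_single_four, structureForm_eq_zero_left] <;> simp

lemma br6_J6_br6_right (x y z : Fin 6 → ℝ) : br6 z (J6 (br6 x y)) = 0 := by
  rw [br6_eq_single z, br6_eq_single x, J6_single_four, structureForm_eq_zero_right] <;> simp

lemma br6_J6_J6 (x y : Fin 6 → ℝ) : br6 (J6 x) (J6 y) = br6 x y := by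
  rw [br6_eq_single, br6_eq_single, structureForm_J6]

lemma ip6_br6_left (x y z : Fin 6 → ℝ) : ip6 (br6 x y) z = structureForm x y * z 4 := by
  rw [br6_eq_single, ip6_single_left]

lemma ip6_br6_br6 (x y z w : Fin 6 → ℝ) :
    ip6 (br6 x y) (br6 z w) = structureForm x y * structureForm z w := by
  rw [ip6_br6_left, br6_eq_single, Pi.single_eq_same]

/-- `br6` makes `ℝ⁶` a (2-step nilpotent) Lie algebra, `J6` is an abelian (hence
integrable) complex structure, the Bismut torsion equals `-f¹²⁵+f¹⁴⁵-f²³⁵-f³⁴⁵`, and it is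
closed, so `(ℝ⁶, J6, ip6)` is SKT. -/
theorem stmt12 :
    (∀ x y : Fin 6 → ℝ, br6 x y = - br6 y x) ∧
    (∀ x y z : Fin 6 → ℝ, br6 x (br6 y z) + br6 y (br6 z x) + br6 z (br6 x y) = 0) ∧
    (∀ x : Fin 6 → ℝ, J6 (J6 x) = -x) ∧
    (∀ x y : Fin 6 → ℝ, br6 (J6 x) (J6 y) = br6 x y) ∧
    (∀ U Y Z : Fin 6 → ℝ,
      c6 U Y Z = -w6 0 1 4 U Y Z + w6 0 3 4 U Y Z - w6 1 2 4 U Y Z - w6 2 3 4 U Y Z) ∧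
    (∀ W U Y Z : Fin 6 → ℝ, dc6 W U Y Z = 0) := by
  refine ⟨br6_swap, fun x y z => ?_, J6_J6, br6_J6_J6, fun U Y Z => ?_, fun W U Y Z => ?_⟩
  · simp only [br6_br6, add_zero]
  · simp only [c6, br6_J6_J6, ip6_br6_left, w6, Matrix.det_fin_three, structureForm,
      Matrix.of_apply, Matrix.cons_val', Matrix.cons_val_zero, Matrix.cons_val_fin_one,
      Matrix.cons_val_one, Matrix.cons_val]
    ring
  · simp only [dc6, br6_J6_br6_left, br6_J6_br6_right]
    simp only [ip6_zero_left, br6_J6_J6, ip6_br6_br6]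
    linear_combination 2 * structureForm_wedge_self W U Y Z
end

section
/- Let g be a 2-step nilpotent Lie algebra constructed as g = n₁ ⊕ n₂ ⊕ span{Z,W} with [Z,W] = X + Y, X ∈ z(n₁) ∩ [n₁,n₁]^⊥ nonzero, Y ∈ z(n₂) ∩ [n₂,n₂]^⊥ nonzero, where for each i, dim z(n_i) > dim [n_i,n_i]. Then dim z(g) > dim [g,g]. -/
/-!
Every bracket of `g` has the form `[u₁, v₁] + [u₂, v₂] + c (X + Y)`, so `[g, g]` lies in
`[n₁, n₁] ⊕ [n₂, n₂] ⊕ ℝ (X + Y)` and `dim [g, g] ≤ dim [n₁, n₁] + dim [n₂, n₂] + 1`.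
Bracketing with `Z` and `W` detects the `W`- and `Z`-components (as multiples of `X ≠ 0`), so
`z(g) = z(n₁) ⊕ z(n₂)`, of dimension at least `dim [n₁, n₁] + dim [n₂, n₂] + 2`.
-/

open Module

namespace Submodule

variable {R M N : Type*} [Semiring R] [AddCommMonoid M] [AddCommMonoid N] [Module R M] [Module R N]

def prodEquiv (p : Submodule R M) (q : Submodule R N) : p.prod q ≃ₗ[R] p × q where
  toFun x := (⟨x.1.1, x.2.1⟩, ⟨x.1.2, x.2.2⟩)
  invFun y := ⟨(y.1.1, y.2.1), ⟨y.1.2, y.2.2⟩⟩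
  left_inv _ := rfl
  right_inv _ := rfl
  map_add' _ _ := rfl
  map_smul' _ _ := rfl

theorem finrank_prod {K V W : Type*} [DivisionRing K] [AddCommGroup V] [AddCommGroup W]
    [Module K V] [Module K W] [FiniteDimensional K V] [FiniteDimensional K W]
    (p : Submodule K V) (q : Submodule K W) :
    finrank K (p.prod q) = finrank K p + finrank K q := by
  rw [(prodEquiv p q).finrank_eq, Module.finrank_prod]

end Submodule

theorem LieAlgebra.mem_center_iff_forall_lie_eq_zero {R L : Type*} [CommRing R] [LieRing L]
    [LieAlgebra R L] {x : L} : x ∈ center R L ↔ ∀ y : L, ⁅x, y⁆ = 0 := by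
  rw [LieModule.mem_maxTrivSubmodule]
  exact forall_congr' fun y => by rw [← lie_skew, neg_eq_zero]

section Glued

variable {K n₁ n₂ : Type*} [Field K] [LieRing n₁] [LieAlgebra K n₁] [LieRing n₂] [LieAlgebra K n₂]

/-- `(x₁, x₂, a, b)` stands for `x₁ + x₂ + a Z + b W`, and `[Z, W] = X + Y`. -/
def gluedBracket (X : n₁) (Y : n₂) (u v : n₁ × n₂ × K × K) : n₁ × n₂ × K × K :=
  (⁅u.1, v.1⁆ + (u.2.2.1 * v.2.2.2 - u.2.2.2 * v.2.2.1) • X,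
    ⁅u.2.1, v.2.1⁆ + (u.2.2.1 * v.2.2.2 - u.2.2.2 * v.2.2.1) • Y, 0, 0)

variable (X : n₁) (Y : n₂)

theorem gluedBracket_eq_add_smul (u v : n₁ × n₂ × K × K) :
    gluedBracket X Y u v = (⁅u.1, v.1⁆, ⁅u.2.1, v.2.1⁆, 0, 0) +
      (u.2.2.1 * v.2.2.2 - u.2.2.2 * v.2.2.1) • (X, Y, (0 : K), (0 : K)) := by
  simp [gluedBracket]

theorem forall_gluedBracket_eq_zero_iff {X : n₁} (hX : X ≠ 0) (x : n₁ × n₂ × K × K) :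
    (∀ y, gluedBracket X Y x y = 0) ↔
      x ∈ (LieAlgebra.center K n₁ : Submodule K n₁).prod
        ((LieAlgebra.center K n₂ : Submodule K n₂).prod ⊥) := by
  obtain ⟨x₁, x₂, a, b⟩ := x
  simp only [Submodule.mem_prod, Submodule.mem_bot, LieIdeal.toLieSubalgebra_toSubmodule,
    LieSubmodule.mem_toSubmodule, LieAlgebra.mem_center_iff_forall_lie_eq_zero, Prod.mk_eq_zero]
  constructor
  · intro h
    have hZ := congrArg Prod.fst (h (0, 0, 0, 1))
    have hW := congrArg Prod.fst (h (0, 0, 1, 0))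
    simp only [gluedBracket, lie_zero, mul_zero, mul_one, zero_add, sub_zero, zero_sub, neg_smul,
      neg_eq_zero, Prod.fst_zero, smul_eq_zero, hX, or_false] at hZ hW
    refine ⟨fun v => ?_, fun v => ?_, hZ, hW⟩
    · simpa [gluedBracket] using congrArg Prod.fst (h (v, 0, 0, 0))
    · simpa [gluedBracket] using congrArg (·.2.1) (h (0, v, 0, 0))
  · rintro ⟨h₁, h₂, rfl, rfl⟩ y
    simp [gluedBracket, h₁, h₂]

variable (K) in
theorem span_gluedBracket_le :
    Submodule.span K {w : n₁ × n₂ × K × K | ∃ u v, w = gluedBracket X Y u v} ≤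
      (Submodule.span K {w : n₁ | ∃ u v : n₁, w = ⁅u, v⁆}).prod
        ((Submodule.span K {w : n₂ | ∃ u v : n₂, w = ⁅u, v⁆}).prod ⊥) ⊔
      K ∙ (X, Y, (0 : K), (0 : K)) := by
  rw [Submodule.span_le]
  rintro _ ⟨u, v, rfl⟩
  rw [SetLike.mem_coe, gluedBracket_eq_add_smul]
  refine add_mem (Submodule.mem_sup_left ?_)
    (Submodule.mem_sup_right (Submodule.smul_mem _ _ (Submodule.mem_span_singleton_self _)))
  exact ⟨Submodule.subset_span ⟨u.1, v.1, rfl⟩, Submodule.subset_span ⟨u.2.1, v.2.1, rfl⟩, rfl⟩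

variable (K) in
theorem finrank_span_gluedBracket_le [FiniteDimensional K n₁] [FiniteDimensional K n₂] :
    finrank K (Submodule.span K {w : n₁ × n₂ × K × K | ∃ u v, w = gluedBracket X Y u v}) ≤
      finrank K (Submodule.span K {w : n₁ | ∃ u v : n₁, w = ⁅u, v⁆}) +
        finrank K (Submodule.span K {w : n₂ | ∃ u v : n₂, w = ⁅u, v⁆}) + 1 := by
  set D₁ := Submodule.span K {w : n₁ | ∃ u v : n₁, w = ⁅u, v⁆}
  set D₂ := Submodule.span K {w : n₂ | ∃ u v : n₂, w = ⁅u, v⁆}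
  have hline : finrank K (K ∙ (X, Y, (0 : K), (0 : K))) ≤ 1 := by
    simpa using finrank_span_le_card (R := K) {(X, Y, (0 : K), (0 : K))}
  calc _ ≤ finrank K (D₁.prod (D₂.prod ⊥) ⊔ K ∙ (X, Y, (0 : K), (0 : K)) :) :=
        Submodule.finrank_mono (span_gluedBracket_le K X Y)
    _ ≤ finrank K (D₁.prod (D₂.prod ⊥)) + finrank K (K ∙ (X, Y, (0 : K), (0 : K))) :=
        Submodule.finrank_add_le_finrank_add_finrank _ _
    _ ≤ _ := by
      rw [Submodule.finrank_prod, Submodule.finrank_prod, finrank_bot, add_zero]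
      gcongr

end Glued

theorem stmt16_general
    (n₁ n₂ : Type*) [LieRing n₁] [LieAlgebra ℝ n₁] [LieRing n₂] [LieAlgebra ℝ n₂]
    [Module.Finite ℝ n₁] [Module.Finite ℝ n₂]
    (X : n₁) (hX0 : X ≠ 0)
    (Y : n₂)
    -- `dim z(nᵢ) > dim [nᵢ,nᵢ]`:
    (hdim₁ : Module.finrank ℝ (Submodule.span ℝ {w : n₁ | ∃ u v : n₁, w = ⁅u, v⁆}) <
      Module.finrank ℝ (LieAlgebra.center ℝ n₁ : Submodule ℝ n₁))
    (hdim₂ : Module.finrank ℝ (Submodule.span ℝ {w : n₂ | ∃ u v : n₂, w = ⁅u, v⁆}) <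
      Module.finrank ℝ (LieAlgebra.center ℝ n₂ : Submodule ℝ n₂))
    (br : (n₁ × n₂ × ℝ × ℝ) → (n₁ × n₂ × ℝ × ℝ) → (n₁ × n₂ × ℝ × ℝ))
    (hbr : ∀ u v : n₁ × n₂ × ℝ × ℝ,
      br u v = (⁅u.1, v.1⁆ + (u.2.2.1 * v.2.2.2 - u.2.2.2 * v.2.2.1) • X,
                ⁅u.2.1, v.2.1⁆ + (u.2.2.1 * v.2.2.2 - u.2.2.2 * v.2.2.1) • Y, 0, 0)) :
    (∀ x : n₁ × n₂ × ℝ × ℝ, (∀ y, br x y = 0) ↔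
      x ∈ (LieAlgebra.center ℝ n₁ : Submodule ℝ n₁).prod
        (((LieAlgebra.center ℝ n₂ : Submodule ℝ n₂)).prod (⊥ : Submodule ℝ (ℝ × ℝ)))) ∧
    Module.finrank ℝ
        (Submodule.span ℝ {w : n₁ × n₂ × ℝ × ℝ | ∃ u v, w = br u v}) <
      Module.finrank ℝ
        ((LieAlgebra.center ℝ n₁ : Submodule ℝ n₁).prod
          (((LieAlgebra.center ℝ n₂ : Submodule ℝ n₂)).prod (⊥ : Submodule ℝ (ℝ × ℝ)))) := by
  obtain rfl : br = gluedBracket X Y := funext₂ hbr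
  refine ⟨forall_gluedBracket_eq_zero_iff Y hX0, ?_⟩
  have hderived := finrank_span_gluedBracket_le ℝ X Y
  rw [Submodule.finrank_prod, Submodule.finrank_prod, finrank_bot, add_zero]
  omega

/-- For the construction `g = n₁ ⊕ n₂ ⊕ span{Z,W}`, `[Z,W] = X + Y` with
`0 ≠ X ∈ z(n₁) ∩ [n₁,n₁]^⊥`, `0 ≠ Y ∈ z(n₂) ∩ [n₂,n₂]^⊥`, if `dim z(nᵢ) > dim [nᵢ,nᵢ]` for
`i = 1,2`, then the center of `g` is `z(n₁) ⊕ z(n₂)` and `dim z(g) > dim [g,g]`. -/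
theorem stmt16
    (n₁ n₂ : Type*) [LieRing n₁] [LieAlgebra ℝ n₁] [LieRing n₂] [LieAlgebra ℝ n₂]
    [Module.Finite ℝ n₁] [Module.Finite ℝ n₂]
    (h2step₁ : ∀ x y w : n₁, ⁅⁅x, y⁆, w⁆ = 0)
    (h2step₂ : ∀ x y w : n₂, ⁅⁅x, y⁆, w⁆ = 0)
    (ip₁ : n₁ →ₗ[ℝ] n₁ →ₗ[ℝ] ℝ) (ip₂ : n₂ →ₗ[ℝ] n₂ →ₗ[ℝ] ℝ)
    (hsymm₁ : ∀ x y, ip₁ x y = ip₁ y x) (hsymm₂ : ∀ x y, ip₂ x y = ip₂ y x)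
    (hpos₁ : ∀ x : n₁, x ≠ 0 → 0 < ip₁ x x) (hpos₂ : ∀ x : n₂, x ≠ 0 → 0 < ip₂ x x)
    (X : n₁) (hX : X ∈ LieAlgebra.center ℝ n₁) (hX0 : X ≠ 0)
    (hXperp : ∀ u v : n₁, ip₁ X ⁅u, v⁆ = 0)
    (Y : n₂) (hY : Y ∈ LieAlgebra.center ℝ n₂) (hY0 : Y ≠ 0)
    (hYperp : ∀ u v : n₂, ip₂ Y ⁅u, v⁆ = 0)
    -- `dim z(nᵢ) > dim [nᵢ,nᵢ]`:
    (hdim₁ : Module.finrank ℝ (Submodule.span ℝ {w : n₁ | ∃ u v : n₁, w = ⁅u, v⁆}) <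
      Module.finrank ℝ (LieAlgebra.center ℝ n₁ : Submodule ℝ n₁))
    (hdim₂ : Module.finrank ℝ (Submodule.span ℝ {w : n₂ | ∃ u v : n₂, w = ⁅u, v⁆}) <
      Module.finrank ℝ (LieAlgebra.center ℝ n₂ : Submodule ℝ n₂))
    (br : (n₁ × n₂ × ℝ × ℝ) → (n₁ × n₂ × ℝ × ℝ) → (n₁ × n₂ × ℝ × ℝ))
    (hbr : ∀ u v : n₁ × n₂ × ℝ × ℝ,
      br u v = (⁅u.1, v.1⁆ + (u.2.2.1 * v.2.2.2 - u.2.2.2 * v.2.2.1) • X,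
                ⁅u.2.1, v.2.1⁆ + (u.2.2.1 * v.2.2.2 - u.2.2.2 * v.2.2.1) • Y, 0, 0)) :
    (∀ x : n₁ × n₂ × ℝ × ℝ, (∀ y, br x y = 0) ↔
      x ∈ (LieAlgebra.center ℝ n₁ : Submodule ℝ n₁).prod
        (((LieAlgebra.center ℝ n₂ : Submodule ℝ n₂)).prod (⊥ : Submodule ℝ (ℝ × ℝ)))) ∧
    Module.finrank ℝ
        (Submodule.span ℝ {w : n₁ × n₂ × ℝ × ℝ | ∃ u v, w = br u v}) <
      Module.finrank ℝ
        ((LieAlgebra.center ℝ n₁ : Submodule ℝ n₁).prod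
          (((LieAlgebra.center ℝ n₂ : Submodule ℝ n₂)).prod (⊥ : Submodule ℝ (ℝ × ℝ)))) :=
  stmt16_general n₁ n₂ X hX0 Y hdim₁ hdim₂ br hbr
end
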